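/- arXiv:1909.02981 — 3 statements merged into one kernel-verified Lean document; each statement's English description precedes it below -/
import Mathlib

section
/- Let ρ be a bounded self-adjoint operator and D a bounded operator on a complex Hilbert space h, and let c be a nonzero real number such that ρD = c Dρ. Then: (i) ρ commutes with DD* and with D*D; (ii) ker D and (ker D)^⊥ are invariant under ρ, and consequently ρ commutes with the orthogonal projection onto ker D (and likewise with the orthogonal projection onto ker D*). -/
/-!
Conjugating `ρD = c Dρ` by the adjoint gives `D⋆ρ = c ρD⋆`, so `ρ` passes through `D` and `D⋆`
with the reciprocal factors `c` and `c⁻¹`; these cancel in `DD⋆` and `D⋆D`. Likewise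
`D(ρx) = c⁻¹ ρ(Dx)` shows that `ρ` preserves `ker D` (and `ker D⋆`), hence, being self-adjoint,
also its orthogonal complement. An orthogonal projection commutes with every operator that
preserves both its range and its kernel, which is the orthogonal complement of its range.
-/

open ContinuousLinearMap

section TwistedCommutation

variable {R A : Type*} [CommSemiring R] [Semiring A] [Algebra R A]

theorem commute_mul_of_mul_eq_smul {a x y : A} {c : R} (hx : a * x = c • (x * a))
    (hy : y * a = c • (a * y)) : Commute a (x * y) :=
  calc a * (x * y) = x * (c • (a * y)) := by
        rw [← mul_assoc, hx, smul_mul_assoc, mul_smul_comm, mul_assoc]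
    _ = x * y * a := by rw [← hy, mul_assoc]

theorem IsSelfAdjoint.star_mul_eq_smul [StarRing R] [StarRing A] [StarModule R A] {a x : A}
    {c : R} (ha : IsSelfAdjoint a) (hc : IsSelfAdjoint c) (h : a * x = c • (x * a)) :
    star x * a = c • (a * star x) := by
  simpa only [star_mul, star_smul, ha.star_eq, hc.star_eq] using congrArg star h

end TwistedCommutation

theorem ContinuousLinearMap.ker_mem_invtSubmodule_of_mul_eq_smul {R M : Type*} [CommSemiring R]
    [TopologicalSpace M] [AddCommMonoid M] [Module R M] [ContinuousConstSMul R M]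
    {a x : M →L[R] M} {c : R} (h : x * a = c • (a * x)) :
    LinearMap.ker (x : M →ₗ[R] M) ∈ Module.End.invtSubmodule (a : M →ₗ[R] M) := by
  refine (Module.End.mem_invtSubmodule_iff_forall_mem_of_mem _).mpr fun v hv => ?_
  have hv : x v = 0 := hv
  simpa [hv] using congr($h v)

section InnerProductSpace

variable {𝕜 E : Type*} [RCLike 𝕜] [NormedAddCommGroup E] [InnerProductSpace 𝕜 E]
  [CompleteSpace E] {a : E →L[𝕜] E}

theorem IsSelfAdjoint.orthogonal_mem_invtSubmodule (ha : IsSelfAdjoint a) {U : Submodule 𝕜 E}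
    (h : U ∈ Module.End.invtSubmodule (a : E →ₗ[𝕜] E)) :
    Uᗮ ∈ Module.End.invtSubmodule (a : E →ₗ[𝕜] E) :=
  ContinuousLinearMap.orthogonal_mem_invtSubmodule (by rwa [ha.adjoint_eq])

theorem IsSelfAdjoint.commute_of_range_mem_invtSubmodule {p : E →L[𝕜] E}
    (ha : IsSelfAdjoint a) (hp : IsStarProjection p)
    (h : LinearMap.range (p : E →ₗ[𝕜] E) ∈ Module.End.invtSubmodule (a : E →ₗ[𝕜] E)) :
    Commute a p := by
  have hker : LinearMap.ker (p : E →ₗ[𝕜] E) ∈ Module.End.invtSubmodule (a : E →ₗ[𝕜] E) := by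
    rw [← hp.isSelfAdjoint.isSymmetric.orthogonal_range]
    exact ha.orthogonal_mem_invtSubmodule h
  exact ((IsIdempotentElem.commute_iff hp.isIdempotentElem).mpr ⟨h, hker⟩).symm

end InnerProductSpace

/-- If `ρ` is a bounded self-adjoint operator, `D` a bounded operator on a complex Hilbert
space, and `c ≠ 0` a real number with `ρD = c Dρ`, then: (i) `ρ` commutes with `DD⋆` and with
`D⋆D`; (ii) `ker D` and `(ker D)^⊥` are invariant under `ρ`, and `ρ` commutes with every
orthogonal projection onto `ker D` (i.e. every self-adjoint idempotent with range `ker D`),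
and likewise for `ker D⋆`. -/
theorem commutes_of_local_detailed_balance
    {h : Type*} [NormedAddCommGroup h] [InnerProductSpace ℂ h] [CompleteSpace h]
    (ρ D : h →L[ℂ] h) (hρ : IsSelfAdjoint ρ) (c : ℝ) (hc : c ≠ 0)
    (hdb : ρ * D = ((c : ℝ) : ℂ) • (D * ρ)) :
    ρ * (D * adjoint D) = (D * adjoint D) * ρ ∧
    ρ * (adjoint D * D) = (adjoint D * D) * ρ ∧
    (∀ x ∈ LinearMap.ker (D : h →ₗ[ℂ] h), ρ x ∈ LinearMap.ker (D : h →ₗ[ℂ] h)) ∧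
    (∀ x ∈ (LinearMap.ker (D : h →ₗ[ℂ] h) : Submodule ℂ h)ᗮ, ρ x ∈ (LinearMap.ker (D : h →ₗ[ℂ] h) : Submodule ℂ h)ᗮ) ∧
    (∀ Pk : h →L[ℂ] h, IsSelfAdjoint Pk → Pk * Pk = Pk →
      LinearMap.range (Pk : h →ₗ[ℂ] h) = LinearMap.ker (D : h →ₗ[ℂ] h) → ρ * Pk = Pk * ρ) ∧
    (∀ Pk : h →L[ℂ] h, IsSelfAdjoint Pk → Pk * Pk = Pk →
      LinearMap.range (Pk : h →ₗ[ℂ] h) = LinearMap.ker ((adjoint D : h →L[ℂ] h) : h →ₗ[ℂ] h) → ρ * Pk = Pk * ρ) := by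
  have hc' : ((c : ℝ) : ℂ) ≠ 0 := Complex.ofReal_ne_zero.mpr hc
  have hdb_adj : adjoint D * ρ = ((c : ℝ) : ℂ) • (ρ * adjoint D) := by
    simpa only [star_eq_adjoint] using hρ.star_mul_eq_smul (Complex.conj_ofReal c) hdb
  have hdb_inv : D * ρ = (((c : ℝ) : ℂ))⁻¹ • (ρ * D) := (eq_inv_smul_iff₀ hc').mpr hdb.symm
  have hdb_adj_inv : ρ * adjoint D = (((c : ℝ) : ℂ))⁻¹ • (adjoint D * ρ) :=
    (eq_inv_smul_iff₀ hc').mpr hdb_adj.symm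
  have hker := ker_mem_invtSubmodule_of_mul_eq_smul hdb_inv
  have hker_adj := ker_mem_invtSubmodule_of_mul_eq_smul hdb_adj
  refine ⟨commute_mul_of_mul_eq_smul hdb hdb_adj, commute_mul_of_mul_eq_smul hdb_adj_inv hdb_inv,
    (Module.End.mem_invtSubmodule_iff_forall_mem_of_mem _).mp hker,
    (Module.End.mem_invtSubmodule_iff_forall_mem_of_mem _).mp
      (hρ.orthogonal_mem_invtSubmodule hker),
    fun Pk hsa hidem hrange => ?_, fun Pk hsa hidem hrange => ?_⟩
  · exact hρ.commute_of_range_mem_invtSubmodule ⟨hidem, hsa⟩ (hrange ▸ hker)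
  · exact hρ.commute_of_range_mem_invtSubmodule ⟨hidem, hsa⟩ (hrange ▸ hker_adj)
end

section
/- Let D be a linear operator on ℂ^d, let Γ_−, Γ_+ > 0, ζ_−, ζ_+ ∈ ℝ, set Δ := ζ_− D*D + ζ_+ DD*, and define ℒ_*(ρ) := −(Γ_−/2)(D*Dρ + ρD*D) + Γ_+ D*ρD − (Γ_+/2)(DD*ρ + ρDD*) + Γ_− DρD* − i(Δρ − ρΔ). If ρ is a self-adjoint operator satisfying the detailed balance relation ρD = (Γ_−/Γ_+) D ρ, then ℒ_*(ρ) = 0. Moreover, if in addition Γ_− ≠ Γ_+, then tr(ρD) = 0. -/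
open ContinuousLinearMap

noncomputable section

/-! With `c = Γ₋/Γ₊`, the relation `ρD = c Dρ` and its adjoint `D⋆ρ = c ρD⋆` move `ρ` across
`D` and `D⋆`: `c D⋆Dρ` and `c ρD⋆D` both equal `D⋆ρD`, while `DD⋆ρ` and `ρDD⋆` both equal
`c DρD⋆`. So each anticommutator term cancels the sandwich term carrying the other rate, and `ρ`
commutes with `Δ`. Cyclicity of the trace gives `tr(ρD) = c tr(Dρ) = c tr(ρD)`. -/

section StarAlgebra

variable {A : Type*} [Ring A] [StarRing A] [Algebra ℂ A]

def effectiveHamiltonian (ζm ζp : ℝ) (D : A) : A :=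
  (ζm : ℂ) • (star D * D) + (ζp : ℂ) • (D * star D)

def predualGenerator (Γm Γp ζm ζp : ℝ) (D ρ : A) : A :=
  -((Γm / 2 : ℝ) : ℂ) • (star D * D * ρ + ρ * (star D * D))
    + ((Γp : ℝ) : ℂ) • (star D * ρ * D)
    - ((Γp / 2 : ℝ) : ℂ) • (D * star D * ρ + ρ * (D * star D))
    + ((Γm : ℝ) : ℂ) • (D * ρ * star D)
    - Complex.I • (effectiveHamiltonian ζm ζp D * ρ - ρ * effectiveHamiltonian ζm ζp D)

section DetailedBalance

variable {c : ℝ} {D ρ : A}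

theorem star_mul_eq_smul_mul_star [StarModule ℂ A] (hρ : IsSelfAdjoint ρ)
    (hdb : ρ * D = (c : ℂ) • (D * ρ)) : star D * ρ = (c : ℂ) • (ρ * star D) := by
  simpa [star_smul, hρ.star_eq] using congrArg star hdb

theorem smul_star_mul_self_mul_eq (hdb : ρ * D = (c : ℂ) • (D * ρ)) :
    (c : ℂ) • (star D * D * ρ) = star D * ρ * D := by
  rw [mul_assoc, ← mul_smul_comm, ← hdb, mul_assoc]

theorem smul_mul_star_mul_self_eq [StarModule ℂ A] (hρ : IsSelfAdjoint ρ)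
    (hdb : ρ * D = (c : ℂ) • (D * ρ)) : (c : ℂ) • (ρ * (star D * D)) = star D * ρ * D := by
  rw [← mul_assoc, ← smul_mul_assoc, ← star_mul_eq_smul_mul_star hρ hdb]

theorem mul_star_mul_eq_smul [StarModule ℂ A] (hρ : IsSelfAdjoint ρ)
    (hdb : ρ * D = (c : ℂ) • (D * ρ)) : D * star D * ρ = (c : ℂ) • (D * ρ * star D) := by
  rw [mul_assoc, star_mul_eq_smul_mul_star hρ hdb, mul_smul_comm, mul_assoc]

theorem mul_mul_star_eq_smul (hdb : ρ * D = (c : ℂ) • (D * ρ)) :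
    ρ * (D * star D) = (c : ℂ) • (D * ρ * star D) := by
  rw [← mul_assoc, hdb, smul_mul_assoc]

variable [StarModule ℂ A]

theorem commute_star_mul_self (hc : c ≠ 0) (hρ : IsSelfAdjoint ρ)
    (hdb : ρ * D = (c : ℂ) • (D * ρ)) : Commute ρ (star D * D) :=
  smul_right_injective A (Complex.ofReal_ne_zero.mpr hc) <|
    (smul_mul_star_mul_self_eq hρ hdb).trans (smul_star_mul_self_mul_eq hdb).symm

theorem commute_mul_star_self (hρ : IsSelfAdjoint ρ) (hdb : ρ * D = (c : ℂ) • (D * ρ)) :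
    Commute ρ (D * star D) :=
  (mul_mul_star_eq_smul hdb).trans (mul_star_mul_eq_smul hρ hdb).symm

theorem commute_effectiveHamiltonian (hc : c ≠ 0) (hρ : IsSelfAdjoint ρ)
    (hdb : ρ * D = (c : ℂ) • (D * ρ)) (ζm ζp : ℝ) :
    Commute ρ (effectiveHamiltonian ζm ζp D) :=
  ((commute_star_mul_self hc hρ hdb).smul_right _).add_right
    ((commute_mul_star_self hρ hdb).smul_right _)

end DetailedBalance

theorem predualGenerator_eq_zero [StarModule ℂ A] {Γm Γp : ℝ} (hΓm : Γm ≠ 0) (hΓp : Γp ≠ 0)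
    (ζm ζp : ℝ) {D ρ : A} (hρ : IsSelfAdjoint ρ) (hdb : ρ * D = ((Γm / Γp : ℝ) : ℂ) • (D * ρ)) :
    predualGenerator Γm Γp ζm ζp D ρ = 0 := by
  have h_minus : ((Γm / 2 : ℝ) : ℂ) • (star D * D * ρ + ρ * (star D * D))
      = ((Γp : ℝ) : ℂ) • (star D * ρ * D) := by
    rw [show Γm / 2 = Γp / 2 * (Γm / Γp) by field_simp, Complex.ofReal_mul, mul_smul, smul_add,
      smul_star_mul_self_mul_eq hdb, smul_mul_star_mul_self_eq hρ hdb, ← two_smul ℂ, smul_smul]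
    push_cast; ring_nf
  have h_plus : ((Γp / 2 : ℝ) : ℂ) • (D * star D * ρ + ρ * (D * star D))
      = ((Γm : ℝ) : ℂ) • (D * ρ * star D) := by
    rw [mul_star_mul_eq_smul hρ hdb, mul_mul_star_eq_smul hdb, ← two_smul ℂ, smul_smul, smul_smul]
    exact congrArg (· • _) (by exact_mod_cast (by field_simp : Γp / 2 * 2 * (Γm / Γp) = Γm))
  rw [predualGenerator, neg_smul, h_minus, h_plus,
    (commute_effectiveHamiltonian (div_ne_zero hΓm hΓp) hρ hdb ζm ζp).eq]
  simp

end StarAlgebra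

theorem LinearMap.trace_mul_eq_zero_of_mul_eq_smul_mul {R M : Type*} [CommRing R]
    [NoZeroDivisors R] [AddCommGroup M] [Module R M] {f g : Module.End R M} {c : R} (hc : c ≠ 1)
    (h : f * g = c • (g * f)) : LinearMap.trace R M (f * g) = 0 := by
  have h_cyclic : LinearMap.trace R M (f * g) = c * LinearMap.trace R M (f * g) := by
    conv_lhs => rw [h, map_smul, LinearMap.trace_mul_comm]
    rfl
  have : (1 - c) * LinearMap.trace R M (f * g) = 0 := by linear_combination h_cyclic
  exact (mul_eq_zero.mp this).resolve_left (sub_ne_zero.mpr hc.symm)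

/-- If `ρ` is a self-adjoint operator on `ℂ^d` satisfying the detailed balance relation
`ρD = (Γ₋/Γ₊) Dρ` for the single-frequency WCLT predual generator
`ℒ_*(ρ) = −(Γ₋/2){D⋆D, ρ} + Γ₊ D⋆ρD − (Γ₊/2){DD⋆, ρ} + Γ₋ DρD⋆ − i[Δ, ρ]`,
`Δ = ζ₋ D⋆D + ζ₊ DD⋆`, then `ℒ_*(ρ) = 0`; if moreover `Γ₋ ≠ Γ₊` then `tr(ρD) = 0`. -/
theorem detailed_balance_invariant
    (d : ℕ) (D : EuclideanSpace ℂ (Fin d) →L[ℂ] EuclideanSpace ℂ (Fin d))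
    (Γm Γp : ℝ) (hΓm : 0 < Γm) (hΓp : 0 < Γp) (ζm ζp : ℝ)
    (ρ : EuclideanSpace ℂ (Fin d) →L[ℂ] EuclideanSpace ℂ (Fin d)) (hρ : IsSelfAdjoint ρ)
    (hdb : ρ * D = ((Γm / Γp : ℝ) : ℂ) • (D * ρ)) :
    (-((Γm / 2 : ℝ) : ℂ) • (adjoint D * D * ρ + ρ * (adjoint D * D))
      + ((Γp : ℝ) : ℂ) • (adjoint D * ρ * D)
      - ((Γp / 2 : ℝ) : ℂ) • (D * adjoint D * ρ + ρ * (D * adjoint D))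
      + ((Γm : ℝ) : ℂ) • (D * ρ * adjoint D)
      - Complex.I • ((((ζm : ℂ) • (adjoint D * D) + (ζp : ℂ) • (D * adjoint D)) * ρ)
          - ρ * ((ζm : ℂ) • (adjoint D * D) + (ζp : ℂ) • (D * adjoint D))) = 0) ∧
    (Γm ≠ Γp → LinearMap.trace ℂ (EuclideanSpace ℂ (Fin d)) ↑(ρ * D) = 0) := by
  refine ⟨?_, fun hne => ?_⟩
  · simpa only [predualGenerator, effectiveHamiltonian, star_eq_adjoint] using
      predualGenerator_eq_zero hΓm.ne' hΓp.ne' ζm ζp hρ hdb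
  · have hc : ((Γm / Γp : ℝ) : ℂ) ≠ 1 := by
      exact_mod_cast (div_ne_one_of_ne hne : Γm / Γp ≠ 1)
    exact LinearMap.trace_mul_eq_zero_of_mul_eq_smul_mul hc
      (congrArg ContinuousLinearMap.toLinearMap hdb)
end
end

section
/- Let H = Σ_m ε_m P_m be a self-adjoint operator on ℂ^d with distinct real eigenvalues ε_m and spectral projections P_m (pairwise orthogonal, summing to the identity), let D be a linear operator on ℂ^d, and for each Bohr frequency ω ∈ B_+ := {ε_n − ε_m > 0} set D_ω := Σ_{(n,m): ε_n − ε_m = ω} P_m D P_n. Then the orthogonal projection onto the interaction-free subspace W_D := ∩_{ω∈B_+}(ker D_ω ∩ ker D_ω*) commutes with every spectral projection P_m, and hence commutes with H. -/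
/-
Each Kraus operator `D_ω` lowers the energy by `ω`: with `Π e = Σ_{ε k = e} P k`, one has
`D_ω Π e = Π (e - ω) D_ω`, and taking adjoints, `D_ω⋆ Π e = Π (e + ω) D_ω⋆`. Hence every `Π e`
maps `ker D_ω` and `ker D_ω⋆` into themselves, so it leaves `W_D` invariant. A self-adjoint operator
leaving a subspace invariant also leaves its orthogonal complement invariant, so it commutes with
the orthogonal projection onto it. Since `ε` is injective, `Π (ε m) = P m`.
-/

open ContinuousLinearMap Finset
open scoped Classical

noncomputable section

namespace WCLT7

variable {d : ℕ} {ι : Type*} [Fintype ι]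

/-- the Kraus operator `D_ω = Σ_{(n,m) : ε n − ε m = ω} P m D P n` -/
def Dw (ε : ι → ℝ) (P : ι → (EuclideanSpace ℂ (Fin d) →L[ℂ] EuclideanSpace ℂ (Fin d)))
    (D : EuclideanSpace ℂ (Fin d) →L[ℂ] EuclideanSpace ℂ (Fin d)) (ω : ℝ) :
    EuclideanSpace ℂ (Fin d) →L[ℂ] EuclideanSpace ℂ (Fin d) :=
  ∑ p : ι × ι, if ε p.1 - ε p.2 = ω then P p.2 * D * P p.1 else 0

/-- the (finite) set of Bohr frequencies `B₊ = {ε n − ε m > 0}` -/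
def Bohr (ε : ι → ℝ) : Finset ℝ :=
  (univ.filter fun p : ι × ι => 0 < ε p.1 - ε p.2).image fun p => ε p.1 - ε p.2

/-- the interaction-free subspace `W_D = ∩_{ω ∈ B₊} (ker D_ω ∩ ker D_ω⋆)` -/
def WD (ε : ι → ℝ) (P : ι → (EuclideanSpace ℂ (Fin d) →L[ℂ] EuclideanSpace ℂ (Fin d)))
    (D : EuclideanSpace ℂ (Fin d) →L[ℂ] EuclideanSpace ℂ (Fin d)) :
    Submodule ℂ (EuclideanSpace ℂ (Fin d)) :=
  ⨅ ω ∈ Bohr ε, (LinearMap.ker ((Dw ε P D ω : EuclideanSpace ℂ (Fin d) →ₗ[ℂ] EuclideanSpace ℂ (Fin d))) ⊓ LinearMap.ker ((adjoint (Dw ε P D ω) : EuclideanSpace ℂ (Fin d) →ₗ[ℂ] EuclideanSpace ℂ (Fin d))))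

/-- orthogonal projection onto a subspace, as an operator -/
def projOp (U : Submodule ℂ (EuclideanSpace ℂ (Fin d))) :
    EuclideanSpace ℂ (Fin d) →L[ℂ] EuclideanSpace ℂ (Fin d) :=
  U.subtypeL ∘L U.orthogonalProjectionOnto

lemma ker_mem_invtSubmodule_of_mul_eq {R M : Type*} [Semiring R] [AddCommMonoid M]
    [TopologicalSpace M] [Module R M] {A B C : M →L[R] M} (h : A * B = C * A) :
    LinearMap.ker (A : M →ₗ[R] M) ∈ Module.End.invtSubmodule (B : M →ₗ[R] M) := by
  refine (Module.End.mem_invtSubmodule_iff_forall_mem_of_mem _).mpr fun x hx => ?_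
  rw [LinearMap.mem_ker, coe_coe] at hx ⊢
  simpa [hx] using congr($h x)

lemma commute_starProjection_of_mem_invtSubmodule {𝕜 E : Type*} [RCLike 𝕜]
    [NormedAddCommGroup E] [InnerProductSpace 𝕜 E] [CompleteSpace E]
    {T : E →L[𝕜] E} (hT : IsSelfAdjoint T) {U : Submodule 𝕜 E} [U.HasOrthogonalProjection]
    (hU : U ∈ Module.End.invtSubmodule (T : E →ₗ[𝕜] E)) :
    Commute U.starProjection T := by
  refine (U.isIdempotentElem_starProjection.commute_iff).mpr ⟨?_, ?_⟩
  · simpa using hU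
  · simpa using orthogonal_mem_invtSubmodule (by rwa [hT.adjoint_eq])

section SpectralProjection

variable {R : Type*} [Ring R] (ε : ι → ℝ) (P : ι → R)

def spectralProj (e : ℝ) : R := ∑ k with ε k = e, P k

variable {P}

lemma spectralProj_mul (hidem : ∀ m, P m * P m = P m) (horth : ∀ n m, n ≠ m → P n * P m = 0)
    (e : ℝ) (j : ι) : spectralProj ε P e * P j = if ε j = e then P j else 0 := by
  rw [spectralProj, Finset.sum_mul, Finset.sum_filter, Finset.sum_eq_single j]
  · rw [hidem]
  · intro k _ hkj
    rw [horth k j hkj, ite_self]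
  · simp

lemma mul_spectralProj (hidem : ∀ m, P m * P m = P m) (horth : ∀ n m, n ≠ m → P n * P m = 0)
    (e : ℝ) (j : ι) : P j * spectralProj ε P e = if ε j = e then P j else 0 := by
  rw [spectralProj, Finset.mul_sum, Finset.sum_filter, Finset.sum_eq_single j]
  · rw [hidem]
  · intro k _ hkj
    rw [horth j k hkj.symm, ite_self]
  · simp

lemma spectralProj_apply_self {ε} (hε : Function.Injective ε) (m : ι) :
    spectralProj ε P (ε m) = P m := by
  rw [spectralProj, Finset.sum_eq_single_of_mem m (by simp)]
  intro k hk hkm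
  exact absurd (hε (Finset.mem_filter.mp hk).2) hkm

lemma isSelfAdjoint_spectralProj [StarRing R] (hsa : ∀ m, IsSelfAdjoint (P m)) (e : ℝ) :
    IsSelfAdjoint (spectralProj ε P e) :=
  isSelfAdjoint_sum _ fun k _ => hsa k

end SpectralProjection

section InteractionFree

variable (ε : ι → ℝ) {P : ι → (EuclideanSpace ℂ (Fin d) →L[ℂ] EuclideanSpace ℂ (Fin d))}
  (D : EuclideanSpace ℂ (Fin d) →L[ℂ] EuclideanSpace ℂ (Fin d))

lemma Dw_mul_spectralProj (hidem : ∀ m, P m * P m = P m)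
    (horth : ∀ n m, n ≠ m → P n * P m = 0) (ω e : ℝ) :
    Dw ε P D ω * spectralProj ε P e = spectralProj ε P (e - ω) * Dw ε P D ω := by
  rw [Dw, Finset.sum_mul, Finset.mul_sum]
  refine Finset.sum_congr rfl fun p _ => ?_
  split_ifs with hω
  · have hlevel : ε p.2 = e - ω ↔ ε p.1 = e := by constructor <;> intro <;> linarith
    rw [mul_assoc, mul_spectralProj ε hidem horth, ← mul_assoc, ← mul_assoc,
      spectralProj_mul ε hidem horth]
    simp only [hlevel]
    split_ifs <;> simp
  · rw [zero_mul, mul_zero]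

lemma adjoint_Dw_mul_spectralProj (hsa : ∀ m, IsSelfAdjoint (P m))
    (hidem : ∀ m, P m * P m = P m) (horth : ∀ n m, n ≠ m → P n * P m = 0) (ω e : ℝ) :
    adjoint (Dw ε P D ω) * spectralProj ε P e =
      spectralProj ε P (e + ω) * adjoint (Dw ε P D ω) := by
  have h := congr(star $(Dw_mul_spectralProj ε D hidem horth ω (e + ω)))
  rwa [add_sub_cancel_right, star_mul, star_mul, (isSelfAdjoint_spectralProj ε hsa _).star_eq,
    (isSelfAdjoint_spectralProj ε hsa _).star_eq, star_eq_adjoint, eq_comm] at h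

lemma WD_mem_invtSubmodule_spectralProj (hsa : ∀ m, IsSelfAdjoint (P m))
    (hidem : ∀ m, P m * P m = P m) (horth : ∀ n m, n ≠ m → P n * P m = 0) (e : ℝ) :
    WD ε P D ∈ Module.End.invtSubmodule (spectralProj ε P e).toLinearMap := by
  have hker (ω : ℝ) :=
    ker_mem_invtSubmodule_of_mul_eq (Dw_mul_spectralProj ε D hidem horth ω e)
  have hkerAdj (ω : ℝ) :=
    ker_mem_invtSubmodule_of_mul_eq (adjoint_Dw_mul_spectralProj ε D hsa hidem horth ω e)
  simp only [WD, Module.End.mem_invtSubmodule_iff_forall_mem_of_mem, Submodule.mem_iInf,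
    Submodule.mem_inf] at hker hkerAdj ⊢
  exact fun x hx ω hω => ⟨hker ω x (hx ω hω).1, hkerAdj ω x (hx ω hω).2⟩

end InteractionFree

theorem projWD_commutes_with_spectral_projections_general
    (ε : ι → ℝ) (hε : Function.Injective ε)
    (P : ι → (EuclideanSpace ℂ (Fin d) →L[ℂ] EuclideanSpace ℂ (Fin d)))
    (hsa : ∀ m, IsSelfAdjoint (P m)) (hidem : ∀ m, P m * P m = P m)
    (horth : ∀ n m, n ≠ m → P n * P m = 0)
    (D : EuclideanSpace ℂ (Fin d) →L[ℂ] EuclideanSpace ℂ (Fin d)) :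
    (∀ m, projOp (WD ε P D) * P m = P m * projOp (WD ε P D)) ∧
    projOp (WD ε P D) * (∑ m, ((ε m : ℝ) : ℂ) • P m)
      = (∑ m, ((ε m : ℝ) : ℂ) • P m) * projOp (WD ε P D) := by
  have hcomm (m : ι) : Commute (projOp (WD ε P D)) (P m) := by
    rw [← spectralProj_apply_self (P := P) hε m]
    exact commute_starProjection_of_mem_invtSubmodule (isSelfAdjoint_spectralProj ε hsa _)
      (WD_mem_invtSubmodule_spectralProj ε D hsa hidem horth _)
  exact ⟨fun m => (hcomm m).eq, (Commute.sum_right _ _ _ fun m _ => (hcomm m).smul_right _).eq⟩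

/-- The orthogonal projection onto the interaction-free subspace `W_D` commutes with every
spectral projection `P m` of the reference Hamiltonian `H = Σ_m ε_m P_m`, and hence with
`H` itself. -/
theorem projWD_commutes_with_spectral_projections
    (ε : ι → ℝ) (hε : Function.Injective ε)
    (P : ι → (EuclideanSpace ℂ (Fin d) →L[ℂ] EuclideanSpace ℂ (Fin d)))
    (hsa : ∀ m, IsSelfAdjoint (P m)) (hidem : ∀ m, P m * P m = P m)
    (horth : ∀ n m, n ≠ m → P n * P m = 0) (hsum : ∑ m, P m = 1)
    (D : EuclideanSpace ℂ (Fin d) →L[ℂ] EuclideanSpace ℂ (Fin d)) :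
    (∀ m, projOp (WD ε P D) * P m = P m * projOp (WD ε P D)) ∧
    projOp (WD ε P D) * (∑ m, ((ε m : ℝ) : ℂ) • P m)
      = (∑ m, ((ε m : ℝ) : ℂ) • P m) * projOp (WD ε P D) :=
  projWD_commutes_with_spectral_projections_general ε hε P hsa hidem horth D

end WCLT7
end
end
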